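/- Every two-sided ideal of G_d contained in G_d² is a K[Y_d,Z_d]-submodule of G_d² (under the identification v_{α,β} ↔ y^α z^β), and conversely every K[Y_d,Z_d]-submodule of G_d² is a two-sided ideal of G_d. -/

import Mathlib

/-!
Products in `G` have zero linear part, and on such elements left multiplication by `u` is
multiplication by the polynomial `Yp u.1 + u.2`, right multiplication by `Zp u.1 + u.2`.
Hence a two-sided ideal inside `G²` is a subspace of `Vid` stable under multiplication by
each `y_i = x_i ∘ _` and `z_j = _ ∘ x_j`, i.e. an ideal of `K[Y,Z]`; conversely an ideal of
`K[Y,Z]` inside `Vid` absorbs all these multiplications.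
-/

open MvPolynomial

variable (K : Type) [Field K] (ι : Type)

/-- The ideal of the polynomial ring `K[Y,Z]` (variables `y_i = X (inl i)`,
`z_j = X (inr j)`) generated by the products `y_i * z_j`; its underlying `K`-vector
space is spanned by the monomials `Y^α Z^β` with `|α| > 0` and `|β| > 0`. -/
noncomputable def Vid : Ideal (MvPolynomial (ι ⊕ ι) K) :=
  Ideal.span {p | ∃ i j, p = X (Sum.inl i) * X (Sum.inr j)}

/-- The linear polynomial `∑ a_i y_i`. -/
noncomputable def Yp (a : ι →₀ K) : MvPolynomial (ι ⊕ ι) K :=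
  a.sum fun i c => C c * X (Sum.inl i)

/-- The linear polynomial `∑ b_j z_j`. -/
noncomputable def Zp (b : ι →₀ K) : MvPolynomial (ι ⊕ ι) K :=
  b.sum fun j c => C c * X (Sum.inr j)

/-- The model `G` of the free bicommutative algebra with generators `x_i` indexed
by `ι`: its elements are pairs (linear part in the `x_i`'s, element of the span of
the `v_{α,β} = Y^α Z^β`). -/
abbrev GA : Type := (ι →₀ K) × (Vid K ι)

lemma mul_mem_Vid (a b : ι →₀ K) (p q : MvPolynomial (ι ⊕ ι) K)
    (hp : p ∈ Vid K ι) (hq : q ∈ Vid K ι) :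
    (Yp K ι a + p) * (Zp K ι b + q) ∈ Vid K ι := by
  have hYZ : Yp K ι a * Zp K ι b ∈ Vid K ι := by
    rw [Yp, Zp, Finsupp.sum, Finsupp.sum, Finset.sum_mul_sum]
    refine Submodule.sum_mem _ fun i _ => Submodule.sum_mem _ fun j _ => ?_
    have h : (C (a i) * X (Sum.inl i)) * (C (b j) * X (Sum.inr j))
        = (C (a i) * C (b j)) * (X (Sum.inl i) * X (Sum.inr j) :
          MvPolynomial (ι ⊕ ι) K) := by ring
    rw [h]
    exact Ideal.mul_mem_left _ _ (Ideal.subset_span ⟨i, j, rfl⟩)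
  have e : (Yp K ι a + p) * (Zp K ι b + q)
      = Yp K ι a * Zp K ι b + (Yp K ι a * q + (p * Zp K ι b + p * q)) := by ring
  rw [e]
  exact add_mem hYZ (add_mem (Ideal.mul_mem_left _ _ hq)
    (add_mem (Ideal.mul_mem_right _ _ hp) (Ideal.mul_mem_left _ _ hq)))

/-- The multiplication of `G`: `x_i ∘ x_j = y_i z_j`, `x_i ∘ v_{α,β} = v_{α+ε_i,β}`,
`v_{α,β} ∘ x_j = v_{α,β+ε_j}`, `v_{α,β} ∘ v_{γ,δ} = v_{α+γ,β+δ}`, extended bilinearly. -/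
noncomputable instance : Mul (GA K ι) :=
  ⟨fun u v => (0, ⟨(Yp K ι u.1 + (u.2 : MvPolynomial (ι ⊕ ι) K)) *
      (Zp K ι v.1 + (v.2 : MvPolynomial (ι ⊕ ι) K)),
    mul_mem_Vid K ι u.1 v.1 _ _ u.2.2 v.2.2⟩)⟩

/-- The generator `x_i` of `G`. -/
noncomputable def xE (i : ι) : GA K ι := (Finsupp.single i 1, 0)

/-- The basis element `v_{α,β}` of `G²`, as a predicate on elements of `G`. -/
def IsVElem (w : GA K ι) (α β : ι →₀ ℕ) : Prop :=
  w.1 = 0 ∧ (w.2 : MvPolynomial (ι ⊕ ι) K) = monomial (Finsupp.sumElim α β) 1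

/-- The square `G²` of `G`: the linear span of all products. -/
noncomputable def Gsq : Submodule K (GA K ι) := Submodule.span K {w | ∃ u v : GA K ι, w = u * v}

/-- Two-sided ideals of the (nonassociative) algebra `G`: `K`-subspaces absorbing
multiplication on both sides. -/
def IsTwoSidedIdeal (I : Submodule K (GA K ι)) : Prop :=
  ∀ (a : GA K ι), ∀ x ∈ I, a * x ∈ I ∧ x * a ∈ I

namespace MvPolynomial

variable {σ R : Type*} [CommSemiring R]

theorem mul_mem_of_forall_X_mul_mem (S : Submodule R (MvPolynomial σ R))
    (hX : ∀ n, ∀ p ∈ S, X n * p ∈ S) (f : MvPolynomial σ R) {p : MvPolynomial σ R}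
    (hp : p ∈ S) : f * p ∈ S := by
  induction f using MvPolynomial.induction_on with
  | C a => simpa only [← smul_eq_C_mul] using S.smul_mem a hp
  | add f g hf hg => simpa only [add_mul] using S.add_mem hf hg
  | mul_X f n hf => simpa only [mul_comm f, mul_assoc] using hX n _ hf

def idealOfXMulMem (S : Submodule R (MvPolynomial σ R))
    (hX : ∀ n, ∀ p ∈ S, X n * p ∈ S) : Ideal (MvPolynomial σ R) where
  toAddSubmonoid := S.toAddSubmonoid
  smul_mem' f _ hp := mul_mem_of_forall_X_mul_mem S hX f hp

end MvPolynomial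

section

variable {K ι}

theorem Yp_zero : Yp K ι 0 = 0 := Finsupp.sum_zero_index

theorem Zp_zero : Zp K ι 0 = 0 := Finsupp.sum_zero_index

theorem Yp_single_one (i : ι) : Yp K ι (Finsupp.single i 1) = X (Sum.inl i) := by
  simp [Yp]

theorem Zp_single_one (j : ι) : Zp K ι (Finsupp.single j 1) = X (Sum.inr j) := by
  simp [Zp]

theorem GA.fst_mul (u v : GA K ι) : (u * v).1 = 0 := rfl

theorem GA.snd_mul (u v : GA K ι) :
    ((u * v).2 : MvPolynomial (ι ⊕ ι) K) =
      (Yp K ι u.1 + (u.2 : MvPolynomial (ι ⊕ ι) K)) *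
      (Zp K ι v.1 + (v.2 : MvPolynomial (ι ⊕ ι) K)) := rfl

theorem fst_eq_zero_of_mem_Gsq {w : GA K ι} (hw : w ∈ Gsq K ι) : w.1 = 0 := by
  have h : Gsq K ι ≤ LinearMap.ker (LinearMap.fst K (ι →₀ K) (Vid K ι)) := by
    rw [Gsq, Submodule.span_le]
    rintro _ ⟨u, v, rfl⟩
    exact GA.fst_mul u v
  exact h hw

theorem snd_xE_mul {w : GA K ι} (hw : w.1 = 0) (i : ι) :
    ((xE K ι i * w).2 : MvPolynomial (ι ⊕ ι) K) =
      X (Sum.inl i) * (w.2 : MvPolynomial (ι ⊕ ι) K) := by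
  simp [GA.snd_mul, xE, hw, Yp_single_one, Zp_zero]

theorem snd_mul_xE {w : GA K ι} (hw : w.1 = 0) (j : ι) :
    ((w * xE K ι j).2 : MvPolynomial (ι ⊕ ι) K) =
      (w.2 : MvPolynomial (ι ⊕ ι) K) * X (Sum.inr j) := by
  simp [GA.snd_mul, xE, hw, Zp_single_one, Yp_zero]

def polyPart (I : Submodule K (GA K ι)) : Submodule K (MvPolynomial (ι ⊕ ι) K) where
  carrier := {p | ∃ w ∈ I, (w.2 : MvPolynomial (ι ⊕ ι) K) = p}
  add_mem' := by
    rintro _ _ ⟨w, hw, rfl⟩ ⟨u, hu, rfl⟩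
    exact ⟨w + u, I.add_mem hw hu, rfl⟩
  zero_mem' := ⟨0, I.zero_mem, rfl⟩
  smul_mem' := by
    rintro a _ ⟨w, hw, rfl⟩
    exact ⟨a • w, I.smul_mem a hw, rfl⟩

theorem polyPart_le_Vid (I : Submodule K (GA K ι)) :
    (polyPart I : Set (MvPolynomial (ι ⊕ ι) K)) ⊆ Vid K ι := by
  rintro _ ⟨w, -, rfl⟩
  exact w.2.2

theorem X_mul_mem_polyPart {I : Submodule K (GA K ι)} (hI : IsTwoSidedIdeal K ι I)
    (hle : I ≤ Gsq K ι) (n : ι ⊕ ι) {p : MvPolynomial (ι ⊕ ι) K} (hp : p ∈ polyPart I) :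
    X n * p ∈ polyPart I := by
  obtain ⟨w, hw, rfl⟩ := hp
  have hw1 := fst_eq_zero_of_mem_Gsq (hle hw)
  cases n with
  | inl i => exact ⟨xE K ι i * w, (hI _ w hw).1, snd_xE_mul hw1 i⟩
  | inr j => exact ⟨w * xE K ι j, (hI _ w hw).2, (snd_mul_xE hw1 j).trans (mul_comm _ _)⟩

theorem isTwoSidedIdeal_of_forall_mem_iff {J : Ideal (MvPolynomial (ι ⊕ ι) K)}
    {I : Submodule K (GA K ι)}
    (hI : ∀ w : GA K ι, w ∈ I ↔ (w.1 = 0 ∧ (w.2 : MvPolynomial (ι ⊕ ι) K) ∈ J)) :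
    IsTwoSidedIdeal K ι I := by
  intro a x hx
  obtain ⟨hx1, hx2⟩ := (hI x).1 hx
  refine ⟨(hI _).2 ⟨GA.fst_mul a x, ?_⟩, (hI _).2 ⟨GA.fst_mul x a, ?_⟩⟩
  · rw [GA.snd_mul, hx1, Zp_zero, zero_add]
    exact J.mul_mem_left _ hx2
  · rw [GA.snd_mul, hx1, Yp_zero, zero_add]
    exact J.mul_mem_right _ hx2

end

/-- Under the identification `v_{α,β} ↔ y^α z^β` of `G_d²` with the ideal of
`K[Y_d,Z_d]` generated by the `y_i z_j`, every two-sided ideal of `G_d` contained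
in `G_d²` is a `K[Y_d,Z_d]`-submodule of `G_d²` (i.e. its set of polynomial
components is an ideal of `K[Y_d,Z_d]` contained in `Vid`), and conversely every
`K[Y_d,Z_d]`-submodule of `G_d²` is a two-sided ideal of `G_d`. -/
theorem Gd_ideals_in_square_are_polynomial_submodules (d : ℕ) :
    (∀ I : Submodule K (GA K (Fin d)), IsTwoSidedIdeal K (Fin d) I →
      I ≤ Gsq K (Fin d) →
      ∃ J : Ideal (MvPolynomial (Fin d ⊕ Fin d) K), J ≤ Vid K (Fin d) ∧
        ∀ p : MvPolynomial (Fin d ⊕ Fin d) K,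
          p ∈ J ↔ ∃ w ∈ I, ((w : GA K (Fin d)).2 : MvPolynomial (Fin d ⊕ Fin d) K) = p) ∧
    (∀ (J : Ideal (MvPolynomial (Fin d ⊕ Fin d) K)), J ≤ Vid K (Fin d) →
      ∀ I : Submodule K (GA K (Fin d)),
        (∀ w : GA K (Fin d), w ∈ I ↔
          (w.1 = 0 ∧ (w.2 : MvPolynomial (Fin d ⊕ Fin d) K) ∈ J)) →
        IsTwoSidedIdeal K (Fin d) I) :=
  ⟨fun I hI hle =>
    ⟨idealOfXMulMem (polyPart I) fun n _ => X_mul_mem_polyPart hI hle n,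
      polyPart_le_Vid I, fun _ => Iff.rfl⟩,
  fun _ _ _ hI => isTwoSidedIdeal_of_forall_mem_iff hI⟩
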